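/- arXiv:2510.21410 — 2 statements merged into one kernel-verified Lean document; each statement's English description precedes it below -/
import Mathlib

section
/- Let M be a log-convex sequence with lim_p μ_p = ∞ (μ_p := M_p/M_{p−1}) and suppose: (a) there exists an integer Q ≥ 2 with liminf_{p→∞} μ_{Qp}/μ_p > 1, and (b) lim_{p→∞} μ_p / (M_{p−1}/M_0)^{1/(p−1)} = +∞. Then the associated weight function ω_M(t) = sup_p log(M_0 t^p/M_p) is slowly varying: for every u > 0, lim_{t→∞} ω_M(ut)/ω_M(t) = 1. -/
/-!
Write `μ_p = M_p / M_{p-1}` and let `N(t)` be the largest `p` with `μ_p ≤ t`. Log-convexity makes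
`μ` non-decreasing, so the terms `log (M_0 t^p / M_p)` increase up to `p = N(t)` and decrease
afterwards, and `ω_M(t)` is the term of index `N(t)`. Comparing the terms of index `N(vt)` at `t`
and at `vt` gives `ω_M(vt) ≤ ω_M(t) + N(vt) log v`. Evaluating the term of index `p` at `t = μ_p`
gives `(p - 1) log (μ_p / (M_{p-1}/M_0)^{1/(p-1)})`, so the growth condition (b) forces
`N(s) = o(ω_M(s))`, and hence `ω_M(t) / ω_M(vt) → 1`.
-/

open Filter

/-- Associated weight function ω_M(t) = sup_p log(M_0 t^p / M_p). -/
noncomputable def assoc (M : ℕ → ℝ) (t : ℝ) : ℝ :=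
  ⨆ p : ℕ, Real.log (M 0 * t ^ p / M p)

open Topology Real

namespace WeightSequence

variable {M : ℕ → ℝ}

noncomputable def mu (M : ℕ → ℝ) (p : ℕ) : ℝ := M p / M (p - 1)

noncomputable def assocTerm (M : ℕ → ℝ) (p : ℕ) (t : ℝ) : ℝ := log (M 0 * t ^ p / M p)

/-- The largest `p` with `μ_p ≤ t` (or `0`) once `μ` is non-decreasing on `p ≥ 1`. -/
noncomputable def optimalIndex (M : ℕ → ℝ) (t : ℝ) : ℕ := sInf {p | t < mu M (p + 1)}

lemma mu_succ (p : ℕ) : mu M (p + 1) = M (p + 1) / M p := rfl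

lemma mu_le_of_le_optimalIndex (t : ℝ) {k : ℕ} (hk₁ : 1 ≤ k) (hk : k ≤ optimalIndex M t) :
    mu M k ≤ t := by
  by_contra! h
  have : optimalIndex M t ≤ k - 1 := Nat.sInf_le (by simpa [Nat.sub_add_cancel hk₁] using h)
  omega

lemma lt_mu_optimalIndex_succ (hqtend : Tendsto (fun p : ℕ => M p / M (p - 1)) atTop atTop)
    (t : ℝ) : t < mu M (optimalIndex M t + 1) := by
  obtain ⟨p₀, hp₀⟩ := eventually_atTop.1 (hqtend.eventually_gt_atTop t)
  exact Nat.sInf_mem (s := {p | t < mu M (p + 1)}) ⟨p₀, hp₀ (p₀ + 1) (by omega)⟩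

section Positive

variable (hpos : ∀ p, 0 < M p)
include hpos

lemma mu_pos (p : ℕ) : 0 < mu M p := div_pos (hpos p) (hpos _)

lemma assocTerm_eq (p : ℕ) {t : ℝ} (ht : 0 < t) :
    assocTerm M p t = log (M 0) + p * log t - log (M p) := by
  rw [assocTerm, log_div (mul_pos (hpos 0) (pow_pos ht p)).ne' (hpos p).ne',
    log_mul (hpos 0).ne' (pow_pos ht p).ne', log_pow]

lemma assocTerm_succ (p : ℕ) {t : ℝ} (ht : 0 < t) :
    assocTerm M (p + 1) t = assocTerm M p t + (log t - log (mu M (p + 1))) := by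
  rw [assocTerm_eq hpos _ ht, assocTerm_eq hpos _ ht, mu_succ,
    log_div (hpos _).ne' (hpos _).ne']
  push_cast
  ring

lemma assocTerm_le_of_le (p : ℕ) {t s : ℝ} (ht : 0 < t) (hts : t ≤ s) :
    assocTerm M p t ≤ assocTerm M p s := by
  have := hpos 0
  have := hpos p
  unfold assocTerm
  gcongr

lemma assocTerm_mu_eq {p : ℕ} (hp : 2 ≤ p) :
    assocTerm M p (mu M p) =
      ((p : ℝ) - 1) * log ((M p / M (p - 1)) / (M (p - 1) / M 0) ^ ((1 : ℝ) / ((p : ℝ) - 1))) := by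
  have hp' : (0 : ℝ) < (p : ℝ) - 1 := by
    have : (2 : ℝ) ≤ p := by exact_mod_cast hp
    linarith
  have hlog_mu : log (M p / M (p - 1)) = log (M p) - log (M (p - 1)) :=
    log_div (hpos p).ne' (hpos _).ne'
  rw [assocTerm_eq hpos p (mu_pos hpos p), mu, log_div (div_pos (hpos _) (hpos _)).ne'
    (rpow_pos_of_pos (div_pos (hpos _) (hpos 0)) _).ne', log_rpow (div_pos (hpos _) (hpos 0)),
    log_div (hpos _).ne' (hpos 0).ne', hlog_mu]
  field_simp
  ring

lemma assocTerm_le_of_forall_mu_le {p n : ℕ} {t : ℝ} (ht : 0 < t) (hpn : p ≤ n)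
    (hμ : ∀ k, p < k → k ≤ n → mu M k ≤ t) : assocTerm M p t ≤ assocTerm M n t := by
  induction n, hpn using Nat.le_induction with
  | base => exact le_rfl
  | succ m hm ih =>
    rw [assocTerm_succ hpos m ht]
    linarith [ih fun k hk₁ hk => hμ k hk₁ (by omega),
      log_le_log (mu_pos hpos _) (hμ (m + 1) (by omega) le_rfl)]

lemma assocTerm_le_of_forall_lt_mu {p n : ℕ} {t : ℝ} (ht : 0 < t) (hnp : n ≤ p)
    (hμ : ∀ k, n < k → k ≤ p → t < mu M k) : assocTerm M p t ≤ assocTerm M n t := by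
  induction p, hnp using Nat.le_induction with
  | base => exact le_rfl
  | succ m hm ih =>
    rw [assocTerm_succ hpos m ht]
    linarith [ih fun k hk₁ hk => hμ k hk₁ (by omega),
      log_le_log ht (hμ (m + 1) (by omega) le_rfl).le]

variable (hlc : ∀ p : ℕ, 1 ≤ p → (M p) ^ 2 ≤ M (p - 1) * M (p + 1))
include hlc

lemma monotoneOn_mu : MonotoneOn (mu M) (Set.Ici 1) := by
  refine monotoneOn_nat_Ici_of_le_succ fun n hn => ?_
  rw [mu, mu_succ, div_le_div_iff₀ (hpos _) (hpos _)]
  nlinarith [hlc n hn]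

variable (hqtend : Tendsto (fun p : ℕ => M p / M (p - 1)) atTop atTop)
include hqtend

lemma le_optimalIndex_of_mu_le {t : ℝ} {k : ℕ} (hk₁ : 1 ≤ k) (hk : mu M k ≤ t) :
    k ≤ optimalIndex M t := by
  by_contra! h
  have := monotoneOn_mu hpos hlc (Set.mem_Ici.2 (Nat.le_add_left 1 _)) (Set.mem_Ici.2 hk₁) h
  linarith [lt_mu_optimalIndex_succ hqtend t]

lemma assocTerm_le_optimalIndex {t : ℝ} (ht : 0 < t) (p : ℕ) :
    assocTerm M p t ≤ assocTerm M (optimalIndex M t) t := by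
  rcases le_total p (optimalIndex M t) with hpn | hnp
  · exact assocTerm_le_of_forall_mu_le hpos ht hpn fun k hk₁ hk =>
      mu_le_of_le_optimalIndex t (by omega) hk
  · exact assocTerm_le_of_forall_lt_mu hpos ht hnp fun k hk₁ _ =>
      (lt_mu_optimalIndex_succ hqtend t).trans_le (monotoneOn_mu hpos hlc
        (Set.mem_Ici.2 (by omega)) (Set.mem_Ici.2 (by omega)) hk₁)

lemma assoc_eq_assocTerm_optimalIndex {t : ℝ} (ht : 0 < t) :
    assoc M t = assocTerm M (optimalIndex M t) t :=
  le_antisymm (ciSup_le (assocTerm_le_optimalIndex hpos hlc hqtend ht))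
    (le_ciSup ⟨_, Set.forall_mem_range.2 (assocTerm_le_optimalIndex hpos hlc hqtend ht)⟩ _)

lemma assocTerm_le_assoc {t : ℝ} (ht : 0 < t) (p : ℕ) : assocTerm M p t ≤ assoc M t := by
  rw [assoc_eq_assocTerm_optimalIndex hpos hlc hqtend ht]
  exact assocTerm_le_optimalIndex hpos hlc hqtend ht p

lemma assoc_le_assoc {t s : ℝ} (ht : 0 < t) (hts : t ≤ s) : assoc M t ≤ assoc M s := by
  rw [assoc_eq_assocTerm_optimalIndex hpos hlc hqtend ht]
  exact (assocTerm_le_of_le hpos _ ht hts).trans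
    (assocTerm_le_assoc hpos hlc hqtend (ht.trans_le hts) _)

lemma tendsto_assoc_atTop : Tendsto (assoc M) atTop atTop := by
  refine tendsto_atTop_mono' atTop ?_
    (tendsto_atTop_add_const_left _ (log (M 0) - log (M 1)) tendsto_log_atTop)
  filter_upwards [eventually_gt_atTop 0] with t ht
  have := assocTerm_le_assoc hpos hlc hqtend ht 1
  rw [assocTerm_eq hpos 1 ht] at this
  push_cast at this
  linarith

lemma assoc_mul_le {v t : ℝ} (hv : 0 < v) (ht : 0 < t) :
    assoc M (v * t) ≤ assoc M t + optimalIndex M (v * t) * log v := by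
  have h := assocTerm_le_assoc hpos hlc hqtend ht (optimalIndex M (v * t))
  rw [assoc_eq_assocTerm_optimalIndex hpos hlc hqtend (mul_pos hv ht),
    assocTerm_eq hpos _ (mul_pos hv ht), log_mul hv.ne' ht.ne']
  rw [assocTerm_eq hpos _ ht] at h
  linarith

variable (hfast : Tendsto
      (fun p : ℕ => (M p / M (p - 1)) / ((M (p - 1) / M 0) ^ ((1 : ℝ) / (p - 1))))
      atTop atTop)
include hfast

lemma eventually_optimalIndex_mul_le_assoc (K : ℝ) :
    ∀ᶠ s in atTop, ((optimalIndex M s : ℝ) - 1) * K ≤ assoc M s := by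
  obtain ⟨p₀, hp₀⟩ := eventually_atTop.1 (hfast.eventually_ge_atTop (exp K))
  filter_upwards [eventually_ge_atTop (mu M (max p₀ 2)), eventually_gt_atTop 0] with s hs hs₀
  set n := optimalIndex M s
  have hn : max p₀ 2 ≤ n := le_optimalIndex_of_mu_le hpos hlc hqtend (by omega) hs
  have hn₁ : (1 : ℝ) ≤ (n : ℝ) - 1 := by
    have : (2 : ℝ) ≤ n := by exact_mod_cast (le_max_right p₀ 2).trans hn
    linarith
  have hexp := hp₀ n ((le_max_left _ _).trans hn)
  have hK : K ≤ log ((M n / M (n - 1)) / (M (n - 1) / M 0) ^ ((1 : ℝ) / ((n : ℝ) - 1))) :=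
    (le_log_iff_exp_le ((exp_pos K).trans_le hexp)).2 hexp
  calc ((n : ℝ) - 1) * K
      ≤ ((n : ℝ) - 1) * log ((M n / M (n - 1)) / (M (n - 1) / M 0) ^ ((1 : ℝ) / ((n : ℝ) - 1))) :=
        mul_le_mul_of_nonneg_left hK (by linarith)
    _ = assocTerm M n (mu M n) := (assocTerm_mu_eq hpos ((le_max_right _ _).trans hn)).symm
    _ ≤ assocTerm M n s :=
        assocTerm_le_of_le hpos n (mu_pos hpos n) (mu_le_of_le_optimalIndex s (by omega) le_rfl)
    _ ≤ assoc M s := assocTerm_le_assoc hpos hlc hqtend hs₀ n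

lemma tendsto_optimalIndex_div_assoc :
    Tendsto (fun s => (optimalIndex M s : ℝ) / assoc M s) atTop (𝓝 0) := by
  refine Asymptotics.IsLittleO.tendsto_div_nhds_zero (Asymptotics.isLittleO_iff.2 fun ε hε => ?_)
  filter_upwards [eventually_optimalIndex_mul_le_assoc hpos hlc hqtend hfast (2 / ε),
    (tendsto_assoc_atTop hpos hlc hqtend).eventually_ge_atTop (2 / ε)] with s hK hω
  have h2ε : 0 < 2 / ε := by positivity
  rw [norm_of_nonneg (Nat.cast_nonneg _), norm_of_nonneg (h2ε.le.trans hω)]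
  have hcancel : ε / 2 * (2 / ε) = 1 := by field_simp
  have hN : (optimalIndex M s : ℝ) - 1 ≤ ε / 2 * assoc M s :=
    calc (optimalIndex M s : ℝ) - 1 = ε / 2 * (((optimalIndex M s : ℝ) - 1) * (2 / ε)) := by
          rw [mul_left_comm, hcancel, mul_one]
      _ ≤ ε / 2 * assoc M s := by gcongr
  have hω' : 1 ≤ ε / 2 * assoc M s := hcancel ▸ by gcongr
  linarith

lemma tendsto_assoc_div_assoc_mul {v : ℝ} (hv : 1 ≤ v) :
    Tendsto (fun t => assoc M t / assoc M (v * t)) atTop (𝓝 1) := by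
  have hv₀ : 0 < v := one_pos.trans_le hv
  have hvt : Tendsto (fun t => v * t) atTop atTop := tendsto_id.const_mul_atTop hv₀
  have hlower : Tendsto (fun t => 1 - log v * (optimalIndex M (v * t) / assoc M (v * t)))
      atTop (𝓝 1) := by
    simpa using ((tendsto_optimalIndex_div_assoc hpos hlc hqtend hfast).comp hvt).const_mul
      (log v) |>.const_sub 1
  refine tendsto_of_tendsto_of_tendsto_of_le_of_le' hlower tendsto_const_nhds ?_ ?_ <;>
    filter_upwards [eventually_gt_atTop 0,
      hvt.eventually ((tendsto_assoc_atTop hpos hlc hqtend).eventually_gt_atTop 0)] with t ht hω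
  · rw [mul_div_assoc', one_sub_div hω.ne', div_le_div_iff_of_pos_right hω]
    linarith [assoc_mul_le hpos hlc hqtend hv₀ ht]
  · exact div_le_one_of_le₀ (assoc_le_assoc hpos hlc hqtend ht (le_mul_of_one_le_left ht.le hv))
      hω.le

end Positive

end WeightSequence

open WeightSequence in
theorem stmt17_general (M : ℕ → ℝ) (hpos : ∀ p, 0 < M p)
    (hlc : ∀ p : ℕ, 1 ≤ p → (M p) ^ 2 ≤ M (p - 1) * M (p + 1))
    (hqtend : Tendsto (fun p : ℕ => M p / M (p - 1)) atTop atTop)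
    (hfast : Tendsto
      (fun p : ℕ => (M p / M (p - 1)) / ((M (p - 1) / M 0) ^ ((1 : ℝ) / (p - 1))))
      atTop atTop) :
    ∀ u : ℝ, 0 < u →
      Tendsto (fun t : ℝ => assoc M (u * t) / assoc M t) atTop (nhds 1) := by
  intro u hu
  rcases le_or_gt 1 u with h1u | hu1
  · simpa using (tendsto_assoc_div_assoc_mul hpos hlc hqtend hfast h1u).inv₀ one_ne_zero
  · have h := (tendsto_assoc_div_assoc_mul hpos hlc hqtend hfast (one_le_inv₀ hu |>.2 hu1.le)).comp
      (tendsto_id.const_mul_atTop hu)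
    simpa [Function.comp_def, inv_mul_cancel_left₀ hu.ne'] using h

/-- For a log-convex weight sequence M with quotients μ_p = M_p/M_{p−1} → ∞,
if (a) ∃ Q ≥ 2 with liminf μ_{Qp}/μ_p > 1 and (b) μ_p/(M_{p−1}/M_0)^{1/(p−1)} → ∞, then
ω_M is slowly varying: ω_M(ut)/ω_M(t) → 1 as t → ∞ for every u > 0. -/
theorem stmt17 (M : ℕ → ℝ) (hpos : ∀ p, 0 < M p)
    (hlc : ∀ p : ℕ, 1 ≤ p → (M p) ^ 2 ≤ M (p - 1) * M (p + 1))
    (hqtend : Tendsto (fun p : ℕ => M p / M (p - 1)) atTop atTop)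
    (hQ : ∃ Q : ℕ, 2 ≤ Q ∧
      1 < Filter.liminf
        (fun p : ℕ => (M (Q * p) / M (Q * p - 1)) / (M p / M (p - 1))) atTop)
    (hfast : Tendsto
      (fun p : ℕ => (M p / M (p - 1)) / ((M (p - 1) / M 0) ^ ((1 : ℝ) / (p - 1))))
      atTop atTop) :
    ∀ u : ℝ, 0 < u →
      Tendsto (fun t : ℝ => assoc M (u * t) / assoc M t) atTop (nhds 1) :=
  stmt17_general M hpos hlc hqtend hfast
end

section
/- Let M be a log-convex sequence with lim_p μ_p = ∞ (μ_p := M_p/M_{p−1}) whose associated weight function ω_M(t) = sup_p log(M_0 t^p/M_p) is slowly varying (ω_M(ut)/ω_M(t) → 1 as t → ∞ for each u > 0). Then lim_{p→∞} μ_p / (M_{p−1}/M_0)^{1/(p−1)} = +∞. -/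
open Filter

/-!
Write `μ_p = M_p / M_{p-1}` and let `g_p` be the quotient in the conclusion. Since `μ_p` is
nondecreasing, the supremum defining `ω_M(μ_p)` is attained at the index `p`, and a direct
computation gives `ω_M(μ_p) = (p - 1) log g_p`. Testing the supremum for `ω_M(2 μ_p)` at the
same index gives `ω_M(2 μ_p) ≥ p log 2 + ω_M(μ_p)`. As `ω_M(2 μ_p) / ω_M(μ_p) → 1` by slow
variation, `p = o(ω_M(μ_p))`, hence `log g_p ≥ ω_M(μ_p) / p → ∞`.
-/

open Topology Real

lemma tendsto_div_atTop_of_add_le_of_tendsto_div_one {α : Type*} {l : Filter α}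
    {g w W : α → ℝ} (hg : ∀ᶠ x in l, 0 < g x) (hw : ∀ᶠ x in l, 0 < w x)
    (hgap : ∀ᶠ x in l, g x + w x ≤ W x) (hratio : Tendsto (fun x => W x / w x) l (𝓝 1)) :
    Tendsto (fun x => w x / g x) l atTop := by
  have hpos : ∀ᶠ x in l, 0 < g x / w x := by
    filter_upwards [hg, hw] with x hgx hwx using div_pos hgx hwx
  have hle : ∀ᶠ x in l, g x / w x ≤ W x / w x - 1 := by
    filter_upwards [hw, hgap] with x hwx hgapx
    rw [le_sub_iff_add_le, ← div_self hwx.ne', ← add_div]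
    exact div_le_div_of_nonneg_right hgapx hwx.le
  have hzero : Tendsto (fun x => g x / w x) l (𝓝[>] 0) := by
    refine tendsto_nhdsWithin_iff.mpr ⟨?_, hpos⟩
    refine tendsto_of_tendsto_of_tendsto_of_le_of_le' tendsto_const_nhds ?_
      (hpos.mono fun x => le_of_lt) hle
    simpa using hratio.sub_const 1
  exact hzero.inv_tendsto_nhdsGT_zero.congr fun x => inv_div (g x) (w x)

section WeightSequence

variable {M : ℕ → ℝ}

lemma monotoneOn_div_pred (hpos : ∀ p, 0 < M p)
    (hlc : ∀ p : ℕ, 1 ≤ p → (M p) ^ 2 ≤ M (p - 1) * M (p + 1)) :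
    MonotoneOn (fun p => M p / M (p - 1)) {p | 1 ≤ p} := by
  refine monotoneOn_nat_Ici_of_le_succ fun n hn => ?_
  have := hlc n hn
  rw [Nat.add_sub_cancel, div_le_div_iff₀ (hpos _) (hpos _)]
  nlinarith

lemma div_pow_succ {t : ℝ} (ht : t ≠ 0) {k : ℕ} (hk : M k ≠ 0) :
    M (k + 1) / t ^ (k + 1) = M k / t ^ k * (M (k + 1) / M k / t) := by
  field_simp
  ring

/-- `q ↦ M q / μ_p ^ q` attains its minimum at `q = p`: its successive quotients
`μ_{q+1} / μ_p` are `≤ 1` before `p` and `≥ 1` after. -/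
lemma div_pow_quotient_le (hpos : ∀ p, 0 < M p)
    (hlc : ∀ p : ℕ, 1 ≤ p → (M p) ^ 2 ≤ M (p - 1) * M (p + 1)) {p : ℕ} (hp : 1 ≤ p) (q : ℕ) :
    M p / (M p / M (p - 1)) ^ p ≤ M q / (M p / M (p - 1)) ^ q := by
  set t := M p / M (p - 1)
  have ht : 0 < t := div_pos (hpos _) (hpos _)
  have hmono := monotoneOn_div_pred hpos hlc
  have hf : ∀ k, 0 ≤ M k / t ^ k := fun k => by have := hpos k; positivity
  rcases le_total p q with hpq | hqp
  · refine monotoneOn_nat_Ici_of_le_succ (f := fun q => M q / t ^ q) (k := p)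
      (fun n hn => ?_) (le_refl p) hpq hpq
    have : t ≤ M (n + 1) / M n := hmono hp (by simp) (by omega)
    rw [div_pow_succ ht.ne' (hpos n).ne']
    exact le_mul_of_one_le_right (hf n) ((one_le_div ht).mpr this)
  · have hdown : ∀ n, q ≤ n → n ≤ p → M n / t ^ n ≤ M q / t ^ q := by
      intro n hqn
      induction n, hqn using Nat.le_induction with
      | base => exact fun _ => le_rfl
      | succ n hqn ih =>
        intro hnp
        have : M (n + 1) / M n ≤ t := hmono (by simp) hp hnp
        rw [div_pow_succ ht.ne' (hpos n).ne']
        exact (mul_le_of_le_one_right (hf n) ((div_le_one ht).mpr this)).trans (ih (by omega))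
    exact hdown p hqp le_rfl

lemma log_term_le_log_term_quotient (hpos : ∀ p, 0 < M p)
    (hlc : ∀ p : ℕ, 1 ≤ p → (M p) ^ 2 ≤ M (p - 1) * M (p + 1)) {p : ℕ} (hp : 1 ≤ p) (q : ℕ) :
    log (M 0 * (M p / M (p - 1)) ^ q / M q) ≤ log (M 0 * (M p / M (p - 1)) ^ p / M p) := by
  have ht : 0 < M p / M (p - 1) := div_pos (hpos _) (hpos _)
  have h0 := hpos 0
  have hq := hpos q
  refine log_le_log (by positivity) ?_
  rw [mul_div_assoc, mul_div_assoc, ← inv_div, ← inv_div (M p)]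
  have := hpos p
  gcongr M 0 * ?_⁻¹
  exact div_pow_quotient_le hpos hlc hp q

/-- `assoc` is a `ciSup`, which is junk unless this range is bounded; this is where
`μ_p → ∞` is needed. -/
lemma bddAbove_range_log_term (hpos : ∀ p, 0 < M p)
    (hlc : ∀ p : ℕ, 1 ≤ p → (M p) ^ 2 ≤ M (p - 1) * M (p + 1))
    (hqtend : Tendsto (fun p : ℕ => M p / M (p - 1)) atTop atTop) {t : ℝ} (ht : 0 < t) :
    BddAbove (Set.range fun q : ℕ => log (M 0 * t ^ q / M q)) := by
  obtain ⟨n, hn, htn⟩ :=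
    ((eventually_ge_atTop 1).and (hqtend.eventually_ge_atTop t)).exists
  refine ⟨log (M 0 * (M n / M (n - 1)) ^ n / M n), Set.forall_mem_range.mpr fun q => ?_⟩
  refine le_trans ?_ (log_term_le_log_term_quotient hpos hlc hn q)
  have := hpos 0
  have := hpos q
  gcongr

lemma log_term_le_assoc (hpos : ∀ p, 0 < M p)
    (hlc : ∀ p : ℕ, 1 ≤ p → (M p) ^ 2 ≤ M (p - 1) * M (p + 1))
    (hqtend : Tendsto (fun p : ℕ => M p / M (p - 1)) atTop atTop) {t : ℝ} (ht : 0 < t) (q : ℕ) :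
    log (M 0 * t ^ q / M q) ≤ assoc M t :=
  le_ciSup (bddAbove_range_log_term hpos hlc hqtend ht) q

lemma assoc_quotient (hpos : ∀ p, 0 < M p)
    (hlc : ∀ p : ℕ, 1 ≤ p → (M p) ^ 2 ≤ M (p - 1) * M (p + 1))
    (hqtend : Tendsto (fun p : ℕ => M p / M (p - 1)) atTop atTop) {p : ℕ} (hp : 1 ≤ p) :
    assoc M (M p / M (p - 1)) = log (M 0 * (M p / M (p - 1)) ^ p / M p) :=
  le_antisymm (ciSup_le (log_term_le_log_term_quotient hpos hlc hp))
    (log_term_le_assoc hpos hlc hqtend (div_pos (hpos _) (hpos _)) p)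

lemma assoc_pos (hpos : ∀ p, 0 < M p)
    (hlc : ∀ p : ℕ, 1 ≤ p → (M p) ^ 2 ≤ M (p - 1) * M (p + 1))
    (hqtend : Tendsto (fun p : ℕ => M p / M (p - 1)) atTop atTop) {t : ℝ} (ht : M 1 / M 0 < t) :
    0 < assoc M t := by
  have h0 := hpos 0
  have h1 := hpos 1
  have ht0 : 0 < t := (div_pos h1 h0).trans ht
  refine (log_pos ?_).trans_le (log_term_le_assoc hpos hlc hqtend ht0 1)
  rw [pow_one, one_lt_div h1, ← div_lt_iff₀' h0]
  exact ht

lemma nat_mul_log_two_add_assoc_quotient_le (hpos : ∀ p, 0 < M p)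
    (hlc : ∀ p : ℕ, 1 ≤ p → (M p) ^ 2 ≤ M (p - 1) * M (p + 1))
    (hqtend : Tendsto (fun p : ℕ => M p / M (p - 1)) atTop atTop) {p : ℕ} (hp : 1 ≤ p) :
    p * log 2 + assoc M (M p / M (p - 1)) ≤ assoc M (2 * (M p / M (p - 1))) := by
  have ht : 0 < M p / M (p - 1) := div_pos (hpos _) (hpos _)
  have h0 := hpos 0
  have := hpos p
  refine le_of_eq_of_le ?_ (log_term_le_assoc hpos hlc hqtend (by positivity) p)
  rw [assoc_quotient hpos hlc hqtend hp, mul_pow, mul_left_comm, mul_div_assoc (2 ^ p),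
    log_mul (by positivity) (by positivity), log_pow]

lemma term_quotient_eq_pow (hpos : ∀ p, 0 < M p) {p : ℕ} (hp : 2 ≤ p) :
    M 0 * (M p / M (p - 1)) ^ p / M p =
      ((M p / M (p - 1)) / (M (p - 1) / M 0) ^ ((1 : ℝ) / (p - 1))) ^ (p - 1) := by
  obtain ⟨n, rfl⟩ : ∃ n, p = n + 1 := ⟨p - 1, by omega⟩
  have hn : n ≠ 0 := by omega
  have h0 := (hpos 0).ne'
  have hMp := (hpos (n + 1)).ne'
  have hMn := (hpos n).ne'
  simp only [Nat.add_sub_cancel, Nat.cast_add, Nat.cast_one, add_sub_cancel_right, one_div]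
  rw [div_pow (M (n + 1) / M n), Real.rpow_inv_natCast_pow (div_pos (hpos n) (hpos 0)).le hn,
    pow_succ]
  field_simp

lemma assoc_quotient_eq_mul_log (hpos : ∀ p, 0 < M p)
    (hlc : ∀ p : ℕ, 1 ≤ p → (M p) ^ 2 ≤ M (p - 1) * M (p + 1))
    (hqtend : Tendsto (fun p : ℕ => M p / M (p - 1)) atTop atTop) {p : ℕ} (hp : 2 ≤ p) :
    assoc M (M p / M (p - 1)) =
      (p - 1) * log ((M p / M (p - 1)) / (M (p - 1) / M 0) ^ ((1 : ℝ) / (p - 1))) := by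
  rw [assoc_quotient hpos hlc hqtend (by omega), term_quotient_eq_pow hpos hp, log_pow,
    Nat.cast_sub (by omega), Nat.cast_one]

lemma tendsto_assoc_quotient_div_atTop (hpos : ∀ p, 0 < M p)
    (hlc : ∀ p : ℕ, 1 ≤ p → (M p) ^ 2 ≤ M (p - 1) * M (p + 1))
    (hqtend : Tendsto (fun p : ℕ => M p / M (p - 1)) atTop atTop)
    (hslow : Tendsto (fun t : ℝ => assoc M (2 * t) / assoc M t) atTop (𝓝 1)) :
    Tendsto (fun p : ℕ => assoc M (M p / M (p - 1)) / p) atTop atTop := by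
  have hw : ∀ᶠ p : ℕ in atTop, 0 < assoc M (M p / M (p - 1)) :=
    (hqtend.eventually_gt_atTop (M 1 / M 0)).mono fun p => assoc_pos hpos hlc hqtend
  have hgap : ∀ᶠ p : ℕ in atTop,
      p * log 2 + assoc M (M p / M (p - 1)) ≤ assoc M (2 * (M p / M (p - 1))) :=
    (eventually_ge_atTop 1).mono fun p => nat_mul_log_two_add_assoc_quotient_le hpos hlc hqtend
  have hg : ∀ᶠ p : ℕ in atTop, 0 < p * log 2 :=
    (eventually_gt_atTop 0).mono fun p hp => mul_pos (Nat.cast_pos.mpr hp) (log_pos one_lt_two)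
  refine ((tendsto_div_atTop_of_add_le_of_tendsto_div_one hg hw hgap
    (hslow.comp hqtend)).atTop_mul_const (log_pos one_lt_two)).congr fun p => ?_
  rw [div_mul_eq_mul_div, mul_div_mul_right _ _ (log_pos one_lt_two).ne']

lemma assoc_quotient_div_le_log (hpos : ∀ p, 0 < M p)
    (hlc : ∀ p : ℕ, 1 ≤ p → (M p) ^ 2 ≤ M (p - 1) * M (p + 1))
    (hqtend : Tendsto (fun p : ℕ => M p / M (p - 1)) atTop atTop) {p : ℕ} (hp : 2 ≤ p)
    (hw : 0 ≤ assoc M (M p / M (p - 1))) :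
    assoc M (M p / M (p - 1)) / p ≤
      log ((M p / M (p - 1)) / (M (p - 1) / M 0) ^ ((1 : ℝ) / (p - 1))) := by
  have hp' : (1 : ℝ) < p := by exact_mod_cast hp
  calc assoc M (M p / M (p - 1)) / p ≤ assoc M (M p / M (p - 1)) / (p - 1) :=
        div_le_div_of_nonneg_left hw (by linarith) (by linarith)
    _ = _ := by
      rw [assoc_quotient_eq_mul_log hpos hlc hqtend hp,
        mul_div_cancel_left₀ _ (sub_pos.mpr hp').ne']

end WeightSequence

/-- For a log-convex weight sequence M with quotients μ_p = M_p/M_{p−1} → ∞,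
if ω_M is slowly varying (ω_M(ut)/ω_M(t) → 1 for each u > 0), then
μ_p/(M_{p−1}/M_0)^{1/(p−1)} → ∞. -/
theorem stmt18 (M : ℕ → ℝ) (hpos : ∀ p, 0 < M p)
    (hlc : ∀ p : ℕ, 1 ≤ p → (M p) ^ 2 ≤ M (p - 1) * M (p + 1))
    (hqtend : Tendsto (fun p : ℕ => M p / M (p - 1)) atTop atTop)
    (hslow : ∀ u : ℝ, 0 < u →
      Tendsto (fun t : ℝ => assoc M (u * t) / assoc M t) atTop (nhds 1)) :
    Tendsto
      (fun p : ℕ => (M p / M (p - 1)) / ((M (p - 1) / M 0) ^ ((1 : ℝ) / (p - 1))))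
      atTop atTop := by
  have hlog : Tendsto (fun p : ℕ =>
      log ((M p / M (p - 1)) / (M (p - 1) / M 0) ^ ((1 : ℝ) / (p - 1)))) atTop atTop := by
    refine tendsto_atTop_mono' atTop ?_
      (tendsto_assoc_quotient_div_atTop hpos hlc hqtend (hslow 2 two_pos))
    filter_upwards [eventually_ge_atTop 2, hqtend.eventually_gt_atTop (M 1 / M 0)] with p hp hμ
    exact assoc_quotient_div_le_log hpos hlc hqtend hp (assoc_pos hpos hlc hqtend hμ).le
  refine (tendsto_exp_atTop.comp hlog).congr fun p => exp_log ?_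
  have := hpos 0
  have := hpos p
  have := hpos (p - 1)
  positivity
end
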